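/- arXiv:2603.25643 — 2 statements merged into one kernel-verified Lean document; each statement's English description precedes it below -/
import Mathlib

section
/- Let a = (a1, a2) be a unit vector in R^2 with a1 > a2 > 0 and let t satisfy a1 - a2 ≤ t ≤ a1 + a2. Then the 2-dimensional Lebesgue measure of the slab {x ∈ [-1/2,1/2]^2 : |a1*x1 + a2*x2| ≤ t/2} equals 1 - (a1 + a2 - t)^2/(4*a1*a2). -/
/-!
By Fubini, the slab has area `∫ (upper - lower)` over `x₁ ∈ [-1/2, 1/2]`, where the `x₂`-section
is `[max (-1/2) ((-t/2 - a₁x₁)/a₂), min (1/2) ((t/2 - a₁x₁)/a₂)]`. In the chamber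
`a₁ - a₂ ≤ t ≤ a₁ + a₂` the lines `a₁x₁ + a₂x₂ = ±t/2` cut the square in the two opposite corners,
so the section length is `1` minus two ramps `(a₁/a₂) (± x₁ - c)⁺` with `c = (t - a₂)/(2a₁)`;
each ramp integrates to the area `(a₁ + a₂ - t)² / (8 a₁ a₂)` of a corner triangle.
-/

open MeasureTheory Set

theorem EuclideanSpace.measurePreserving_fin_two_toProd :
    MeasurePreserving (fun x : EuclideanSpace ℝ (Fin 2) => (x 0, x 1)) :=
  (volume_preserving_finTwoArrow ℝ).comp
    (EuclideanSpace.volume_preserving_symm_measurableEquiv_toLp (Fin 2))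

theorem volume_region_between_cc_eq_integral {α : Type*} [MeasurableSpace α] {μ : Measure α}
    {f g : α → ℝ} {s : Set α} (hf : Measurable f) (hg : Measurable g) (hs : MeasurableSet s)
    (f_int : IntegrableOn f s μ) (g_int : IntegrableOn g s μ) (hfg : ∀ x ∈ s, f x ≤ g x) :
    μ.prod volume {p : α × ℝ | p.1 ∈ s ∧ p.2 ∈ Icc (f p.1) (g p.1)} =
      ENNReal.ofReal (∫ x in s, (g - f) x ∂μ) := by
  have hsection : ∀ x, volume (Prod.mk x ⁻¹' {p : α × ℝ | p.1 ∈ s ∧ p.2 ∈ Icc (f p.1) (g p.1)}) =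
      s.indicator (fun x => ENNReal.ofReal ((g - f) x)) x := by
    intro x
    by_cases hx : x ∈ s
    · simp only [preimage_ofPred_eq, hx, true_and, ofPred_mem_eq, indicator_of_mem hx,
        Real.volume_Icc, Pi.sub_apply]
    · simp [hx]
  rw [Measure.prod_apply (measurableSet_region_between_cc hf hg hs), funext hsection,
    lintegral_indicator hs, ofReal_integral_eq_lintegral_ofReal (g_int.sub f_int)
      ((ae_restrict_iff' hs).2 (ae_of_all _ fun x hx => sub_nonneg.2 (hfg x hx)))]

theorem integral_max_zero_sub {a b c : ℝ} (hac : a ≤ c) (hcb : c ≤ b) :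
    ∫ x in a..b, max 0 (x - c) = (b - c) ^ 2 / 2 := by
  have hint : ∀ p q : ℝ, IntervalIntegrable (fun x => max 0 (x - c)) volume p q :=
    fun p q => (by fun_prop : Continuous fun x : ℝ => max 0 (x - c)).intervalIntegrable p q
  rw [← intervalIntegral.integral_add_adjacent_intervals (hint a c) (hint c b),
    intervalIntegral.integral_congr (g := fun _ => (0 : ℝ)) fun x hx =>
      max_eq_left (sub_nonpos.2 (uIcc_of_le hac ▸ hx).2),
    intervalIntegral.integral_congr (g := fun x => x - c) fun x hx =>
      max_eq_right (sub_nonneg.2 (uIcc_of_le hcb ▸ hx).1),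
    intervalIntegral.integral_zero, intervalIntegral.integral_comp_sub_right fun x => x,
    integral_id]
  ring

theorem integral_one_sub_two_ramps {k c β : ℝ} (hc₁ : -β ≤ c) (hc₂ : c ≤ β) :
    ∫ x in -β..β, (1 - k * max 0 (x - c) - k * max 0 (-x - c)) = 2 * β - k * (β - c) ^ 2 := by
  have hint : ∀ g : ℝ → ℝ, Continuous g → IntervalIntegrable g volume (-β) β :=
    fun g hg => hg.intervalIntegrable _ _
  rw [intervalIntegral.integral_sub (hint _ (by fun_prop)) (hint _ (by fun_prop)),
    intervalIntegral.integral_sub (hint _ (by fun_prop)) (hint _ (by fun_prop)),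
    intervalIntegral.integral_const, intervalIntegral.integral_const_mul,
    intervalIntegral.integral_const_mul,
    intervalIntegral.integral_comp_neg fun x => max 0 (x - c), neg_neg,
    integral_max_zero_sub hc₁ hc₂]
  simp only [smul_eq_mul]
  ring

theorem abs_add_mul_le_iff_mem_Icc {a b r x y : ℝ} (hb : 0 < b) :
    |a * x + b * y| ≤ r ↔ y ∈ Icc ((-r - a * x) / b) ((r - a * x) / b) := by
  rw [abs_le, mem_Icc, div_le_iff₀ hb, le_div_iff₀ hb]
  constructor <;> rintro ⟨h₁, h₂⟩ <;> constructor <;> linarith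

theorem min_sub_mul_eq_sub_mul_max_zero {a k z : ℝ} (hk : 0 ≤ k) :
    min a (a - k * z) = a - k * max 0 z := by
  rw [mul_max_of_nonneg _ _ hk, mul_zero, ← min_sub_sub_left, sub_zero]

theorem max_add_mul_eq_add_mul_max_zero {a k z : ℝ} (hk : 0 ≤ k) :
    max a (a + k * z) = a + k * max 0 z := by
  rw [mul_max_of_nonneg _ _ hk, mul_zero, ← max_add_add_left, add_zero]

section Slab

variable {a1 a2 t : ℝ}

theorem slab_eq_preimage_region_between (h2 : 0 < a2) :
    {x : EuclideanSpace ℝ (Fin 2) | (∀ i, |x i| ≤ 1 / 2) ∧ |a1 * x 0 + a2 * x 1| ≤ t / 2} =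
      (fun x : EuclideanSpace ℝ (Fin 2) => (x 0, x 1)) ⁻¹'
        {p : ℝ × ℝ | p.1 ∈ Icc (-(1 / 2)) (1 / 2) ∧
          p.2 ∈ Icc (max (-(1 / 2)) ((-(t / 2) - a1 * p.1) / a2))
            (min (1 / 2) ((t / 2 - a1 * p.1) / a2))} := by
  ext x
  simp only [mem_ofPred_eq, mem_preimage, Fin.forall_fin_two, abs_add_mul_le_iff_mem_Icc h2,
    ← Icc_inter_Icc, mem_inter_iff, mem_Icc, abs_le]
  tauto

theorem slab_section_width (h1 : 0 < a1) (h2 : 0 < a2) (x : ℝ) :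
    min (1 / 2) ((t / 2 - a1 * x) / a2) - max (-(1 / 2)) ((-(t / 2) - a1 * x) / a2) =
      1 - a1 / a2 * max 0 (x - (t - a2) / (2 * a1))
        - a1 / a2 * max 0 (-x - (t - a2) / (2 * a1)) := by
  have hupper : (t / 2 - a1 * x) / a2 = 1 / 2 - a1 / a2 * (x - (t - a2) / (2 * a1)) := by
    field_simp; ring
  have hlower : (-(t / 2) - a1 * x) / a2 = -(1 / 2) + a1 / a2 * (-x - (t - a2) / (2 * a1)) := by
    field_simp; ring
  have hk : 0 ≤ a1 / a2 := by positivity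
  rw [hupper, hlower, min_sub_mul_eq_sub_mul_max_zero hk, max_add_mul_eq_add_mul_max_zero hk]
  ring

theorem slab_section_lower_le_upper (h12 : a2 < a1) (h2 : 0 < a2) (ht0 : a1 - a2 ≤ t)
    {x : ℝ} (hx : x ∈ Icc (-(1 / 2)) (1 / 2)) :
    max (-(1 / 2)) ((-(t / 2) - a1 * x) / a2) ≤ min (1 / 2) ((t / 2 - a1 * x) / a2) := by
  obtain ⟨hx₁, hx₂⟩ := hx
  refine max_le (le_min (by norm_num) ?_) (le_min ?_ ?_)
  · rw [le_div_iff₀ h2]; nlinarith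
  · rw [div_le_iff₀ h2]; nlinarith
  · gcongr; linarith

end Slab

theorem slab_square_chamber2_volume_general
    (a1 a2 t : ℝ) (h12 : a1 > a2) (h2 : a2 > 0)
    (ht0 : a1 - a2 ≤ t) (ht1 : t ≤ a1 + a2) :
    volume {x : EuclideanSpace ℝ (Fin 2) |
        (∀ i, |x i| ≤ 1 / 2) ∧ |a1 * x 0 + a2 * x 1| ≤ t / 2}
      = ENNReal.ofReal (1 - (a1 + a2 - t) ^ 2 / (4 * a1 * a2)) := by
  have h1 : 0 < a1 := h2.trans h12
  have hlower : Continuous fun x => max (-(1 / 2)) ((-(t / 2) - a1 * x) / a2) := by fun_prop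
  have hupper : Continuous fun x => min (1 / 2) ((t / 2 - a1 * x) / a2) := by fun_prop
  rw [slab_eq_preimage_region_between h2,
    EuclideanSpace.measurePreserving_fin_two_toProd.measure_preimage
      (measurableSet_region_between_cc hlower.measurable hupper.measurable
        measurableSet_Icc).nullMeasurableSet,
    Measure.volume_eq_prod, volume_region_between_cc_eq_integral hlower.measurable
      hupper.measurable measurableSet_Icc hlower.integrableOn_Icc hupper.integrableOn_Icc
      fun x hx => slab_section_lower_le_upper h12 h2 ht0 hx,
    integral_Icc_eq_integral_Ioc, ← intervalIntegral.integral_of_le (by norm_num)]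
  simp only [Pi.sub_apply, slab_section_width h1 h2]
  rw [integral_one_sub_two_ramps]
  · congr 1
    field_simp
    ring
  · rw [le_div_iff₀ (by positivity)]; linarith
  · rw [div_le_iff₀ (by positivity)]; linarith

theorem slab_square_chamber2_volume
    (a1 a2 t : ℝ) (hunit : a1 ^ 2 + a2 ^ 2 = 1) (h12 : a1 > a2) (h2 : a2 > 0)
    (ht0 : a1 - a2 ≤ t) (ht1 : t ≤ a1 + a2) :
    volume {x : EuclideanSpace ℝ (Fin 2) |
        (∀ i, |x i| ≤ 1 / 2) ∧ |a1 * x 0 + a2 * x 1| ≤ t / 2}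
      = ENNReal.ofReal (1 - (a1 + a2 - t) ^ 2 / (4 * a1 * a2)) :=
  slab_square_chamber2_volume_general a1 a2 t h12 h2 ht0 ht1
end

section
/- Let a = (a1,a2) be a unit vector with a1 > a2 > 0 and let a1 - a2 ≤ t ≤ a1 + a2. Then for every nonnegative integer M, the integral over the slice {x ∈ [-1/2,1/2]^2 : ⟨a,x⟩ = t/2} of x1^M + x2^M with respect to 1-dimensional Hausdorff measure equals (1/((M+1)·2^{M+1})) · ( 1/a1 + 1/a2 - (t-a1)^{M+1}/(a1·a2^{M+1}) - (t-a2)^{M+1}/(a1^{M+1}·a2) ). -/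
/-!
In this chamber the slice is the segment of length `L = (a1 + a2 - t) / (2 a1 a2)` running from
`(1/2, (t - a1)/(2 a2))` in the direction of the unit normal `(-a2, a1)` of `a`. This unit-speed
parametrization is an isometry `ℝ → ℝ²`, so it carries `μH[1]` on `[0, L]` (Lebesgue measure) onto
`μH[1]` on the slice, and the integral becomes two integrals of powers of affine functions.
-/

open MeasureTheory Set

theorem Isometry.setIntegral_image_hausdorffMeasure {X Y E : Type*}
    [EMetricSpace X] [CompleteSpace X] [MeasurableSpace X] [BorelSpace X]
    [EMetricSpace Y] [MeasurableSpace Y] [BorelSpace Y]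
    [NormedAddCommGroup E] [NormedSpace ℝ E]
    {f : X → Y} (hf : Isometry f) {d : ℝ} (hd : 0 ≤ d) (s : Set X) (g : Y → E) :
    ∫ y in f '' s, g y ∂μH[d] = ∫ x in s, g (f x) ∂μH[d] := by
  have hemb : MeasurableEmbedding f := hf.isClosedEmbedding.measurableEmbedding
  rw [← Measure.restrict_restrict_of_subset (image_subset_range f s),
    ← hf.map_hausdorffMeasure (Or.inl hd), hemb.setIntegral_map, hemb.injective.preimage_image]

theorem isometry_add_smul {E : Type*} [SeminormedAddCommGroup E] [NormedSpace ℝ E]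
    (p : E) {v : E} (hv : ‖v‖ = 1) : Isometry fun s : ℝ => p + s • v :=
  Isometry.of_dist_eq fun s u => by
    rw [dist_add_left, dist_eq_norm, ← sub_smul, norm_smul, hv, mul_one, Real.dist_eq,
      Real.norm_eq_abs]

theorem intervalIntegral.integral_add_mul_pow {c k : ℝ} (hk : k ≠ 0) (a b : ℝ) (n : ℕ) :
    ∫ s in a..b, (c + k * s) ^ n
      = ((c + k * b) ^ (n + 1) - (c + k * a) ^ (n + 1)) / (k * (n + 1)) := by
  rw [intervalIntegral.integral_comp_add_mul (fun x => x ^ n) hk, integral_pow, smul_eq_mul]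
  field_simp

noncomputable def sliceParam (a1 a2 t : ℝ) (s : ℝ) : EuclideanSpace ℝ (Fin 2) :=
  !₂[1 / 2, (t - a1) / (2 * a2)] + s • !₂[-a2, a1]

@[simp]
theorem sliceParam_apply_zero (a1 a2 t s : ℝ) : sliceParam a1 a2 t s 0 = 1 / 2 - a2 * s := by
  simp [sliceParam]
  ring

@[simp]
theorem sliceParam_apply_one (a1 a2 t s : ℝ) :
    sliceParam a1 a2 t s 1 = (t - a1) / (2 * a2) + a1 * s := by
  simp [sliceParam, mul_comm]

theorem isometry_sliceParam {a1 a2 : ℝ} (hunit : a1 ^ 2 + a2 ^ 2 = 1) (t : ℝ) :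
    Isometry (sliceParam a1 a2 t) :=
  isometry_add_smul _ (by simp [EuclideanSpace.norm_eq, add_comm, hunit])

theorem range_sliceParam {a1 a2 : ℝ} (ha2 : a2 ≠ 0) (t : ℝ) :
    range (sliceParam a1 a2 t) = {x | a1 * x 0 + a2 * x 1 = t / 2} := by
  ext x
  constructor
  · rintro ⟨s, rfl⟩
    simp only [mem_ofPred, sliceParam_apply_zero, sliceParam_apply_one]
    field_simp
    ring
  · intro (hx : a1 * x 0 + a2 * x 1 = t / 2)
    refine ⟨(1 / 2 - x 0) / a2, PiLp.ext (Fin.forall_fin_two.2 ⟨?_, ?_⟩)⟩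
    · simp only [sliceParam_apply_zero]
      field_simp
      ring
    · simp only [sliceParam_apply_one]
      field_simp
      linear_combination -2 * hx

theorem sliceParam_preimage_box {a1 a2 t : ℝ} (h12 : a2 < a1) (h2 : 0 < a2)
    (ht0 : a1 - a2 ≤ t) :
    sliceParam a1 a2 t ⁻¹' {x | ∀ i, |x i| ≤ 1 / 2} = Icc 0 ((a1 + a2 - t) / (2 * a1 * a2)) := by
  have h1 : 0 < a1 := h2.trans h12
  ext s
  simp only [mem_preimage, mem_ofPred, Fin.forall_fin_two, sliceParam_apply_zero,
    sliceParam_apply_one, abs_le, mem_Icc, le_div_iff₀ (by positivity : 0 < 2 * a1 * a2)]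
  rw [div_add' _ _ _ (by positivity)]
  simp only [le_div_iff₀ (by positivity : (0 : ℝ) < 2 * a2),
    div_le_iff₀ (by positivity : (0 : ℝ) < 2 * a2)]
  constructor
  · rintro ⟨⟨-, h0⟩, -, hL⟩
    constructor <;> nlinarith
  · rintro ⟨h0, hL⟩
    have : 0 ≤ a1 * a2 * s := by positivity
    refine ⟨⟨?_, ?_⟩, ?_, ?_⟩ <;> nlinarith

theorem moment_slice_square_chamber2
    (a1 a2 t : ℝ) (M : ℕ)
    (hunit : a1 ^ 2 + a2 ^ 2 = 1) (h12 : a1 > a2) (h2 : a2 > 0)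
    (ht0 : a1 - a2 ≤ t) (ht1 : t ≤ a1 + a2) :
    ∫ x in {x : EuclideanSpace ℝ (Fin 2) |
        (∀ i, |x i| ≤ 1 / 2) ∧ a1 * x 0 + a2 * x 1 = t / 2},
        ((x 0) ^ M + (x 1) ^ M) ∂(μH[1])
      = (1 / ((M + 1) * 2 ^ (M + 1))) *
          (1 / a1 + 1 / a2 - (t - a1) ^ (M + 1) / (a1 * a2 ^ (M + 1))
            - (t - a2) ^ (M + 1) / (a1 ^ (M + 1) * a2)) := by
  have h1 : 0 < a1 := h2.trans h12
  set L := (a1 + a2 - t) / (2 * a1 * a2) with hL_def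
  have hL : 0 ≤ L := div_nonneg (by linarith) (by positivity)
  have hslice : {x : EuclideanSpace ℝ (Fin 2) |
      (∀ i, |x i| ≤ 1 / 2) ∧ a1 * x 0 + a2 * x 1 = t / 2} = sliceParam a1 a2 t '' Icc 0 L := by
    rw [← sliceParam_preimage_box h12 h2 ht0, image_preimage_eq_inter_range,
      range_sliceParam h2.ne']
    rfl
  have hend0 : 1 / 2 + -a2 * L = (t - a2) / (2 * a1) := by
    rw [hL_def]
    field_simp
    ring
  have hend1 : (t - a1) / (2 * a2) + a1 * L = 1 / 2 := by
    rw [hL_def]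
    field_simp
    ring
  rw [hslice, (isometry_sliceParam hunit t).setIntegral_image_hausdorffMeasure zero_le_one,
    hausdorffMeasure_real, integral_Icc_eq_integral_Ioc, ← intervalIntegral.integral_of_le hL]
  simp only [sliceParam_apply_zero, sliceParam_apply_one, sub_eq_add_neg (1 / 2 : ℝ), ← neg_mul]
  rw [intervalIntegral.integral_add (Continuous.intervalIntegrable (by fun_prop) _ _)
      (Continuous.intervalIntegrable (by fun_prop) _ _),
    intervalIntegral.integral_add_mul_pow (neg_ne_zero.2 h2.ne'),
    intervalIntegral.integral_add_mul_pow h1.ne', hend0, hend1]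
  simp only [mul_zero, add_zero, div_pow, mul_pow]
  field_simp
  ring
end
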